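/- arXiv:1701.08822 — 2 statements merged into one kernel-verified Lean document; each statement's English description precedes it below -/
import Mathlib

section
/- Let A be a discrete valuation ring with maximal ideal 𝔐 whose residue field A/𝔐 is algebraically closed of characteristic p > 0, and for j ≥ 1 set A_j = A/𝔐^j. Then for every integer m ≥ j − 1, the set of p^m-th powers of units of A_j equals the set of p^(m+1)-th powers of units of A_j, i.e. (A_jˣ)^(p^m) = (A_jˣ)^(p^(m+1)). -/
open IsLocalRing

private lemma one_add_pow_prime_sub_one_mem {A : Type*} [CommRing A] {p : ℕ}
    (hp : p.Prime) {I : Ideal A} (hpI : (p : A) ∈ I) {r : A} {k : ℕ} (hk : 1 ≤ k)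
    (hr : r ∈ I ^ k) : (1 + r) ^ p - 1 ∈ I ^ (k + 1) := by
  rw [add_pow_prime_eq' hp]
  have h1 : r ^ p ∈ I ^ (k + 1) := by
    have : r ^ p ∈ I ^ (k * p) := by
      rw [pow_mul]
      exact Ideal.pow_mem_pow hr p
    refine Ideal.pow_le_pow_right ?_ this
    calc k + 1 ≤ k + k := by omega
    _ = k * 2 := by ring
    _ ≤ k * p := Nat.mul_le_mul_left k hp.two_le
  have hS : (∑ i ∈ Finset.Ioo 0 p, (1 : A) ^ i * r ^ (p - i) * ((p.choose i / p : ℕ) : A)) ∈ I ^ k := by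
    refine Ideal.sum_mem _ fun i hi => ?_
    rw [Finset.mem_Ioo] at hi
    have h1i : 1 ≤ p - i := by omega
    have : r ^ (p - i) ∈ I ^ k := by
      have : r ^ (p - i) ∈ I ^ (k * (p - i)) := by rw [pow_mul]; exact Ideal.pow_mem_pow hr _
      exact Ideal.pow_le_pow_right (Nat.le_mul_of_pos_right k (by omega)) this
    rw [one_pow]
    exact Ideal.mul_mem_right _ _ (Ideal.mul_mem_left _ _ this)
  have h2 : (p : A) * ∑ i ∈ Finset.Ioo 0 p, (1 : A) ^ i * r ^ (p - i) * ((p.choose i / p : ℕ) : A)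
      ∈ I ^ (k + 1) := by
    rw [pow_succ']
    exact Ideal.mul_mem_mul hpI hS
  have heq : (1 : A) ^ p + r ^ p + (p : A) * (∑ i ∈ Finset.Ioo 0 p,
      (1 : A) ^ i * r ^ (p - i) * ((p.choose i / p : ℕ) : A)) - 1
      = r ^ p + (p : A) * ∑ i ∈ Finset.Ioo 0 p, (1 : A) ^ i * r ^ (p - i) * ((p.choose i / p : ℕ) : A) := by
    rw [one_pow]; ring
  rw [heq]
  exact Ideal.add_mem _ h1 h2

private lemma one_add_pow_prime_pow_sub_one_mem {A : Type*} [CommRing A] {p : ℕ}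
    (hp : p.Prime) {I : Ideal A} (hpI : (p : A) ∈ I) {t : A} (ht : t ∈ I) (m : ℕ) :
    (1 + t) ^ p ^ m - 1 ∈ I ^ (m + 1) := by
  induction m with
  | zero => simpa using ht
  | succ m ih =>
      have key : (1 + ((1 + t) ^ p ^ m - 1)) ^ p - 1 ∈ I ^ (m + 1 + 1) :=
        one_add_pow_prime_sub_one_mem hp hpI (Nat.le_add_left 1 m) ih
      rwa [add_sub_cancel, ← pow_mul, ← pow_succ] at key

/-- **Lemma (stabilization of `p`-power classes of units in `A/𝔐ʲ`).**
Let `A` be a discrete valuation ring with maximal ideal `𝔐` whose residue field `A/𝔐`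
is algebraically closed of characteristic `p > 0`, and let `A_j = A/𝔐^j`. Then for every
`m ≥ j - 1`, the set of `p^m`-th powers of units of `A_j` equals the set of `p^(m+1)`-th
powers of units of `A_j`. -/
theorem pow_units_quotient_maximalIdeal_pow_stabilize
    (p : ℕ) (hp : 0 < p) (A : Type*) [CommRing A] [IsDomain A] [IsDiscreteValuationRing A]
    [IsAlgClosed (IsLocalRing.ResidueField A)] [CharP (IsLocalRing.ResidueField A) p]
    (j : ℕ) (hj : 1 ≤ j) (m : ℕ) (hm : j - 1 ≤ m) :
    {x : A ⧸ (IsLocalRing.maximalIdeal A ^ j) |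
        ∃ u : (A ⧸ (IsLocalRing.maximalIdeal A ^ j))ˣ, (u : A ⧸ (IsLocalRing.maximalIdeal A ^ j)) ^ p ^ m = x} =
      {x : A ⧸ (IsLocalRing.maximalIdeal A ^ j) |
        ∃ u : (A ⧸ (IsLocalRing.maximalIdeal A ^ j))ˣ, (u : A ⧸ (IsLocalRing.maximalIdeal A ^ j)) ^ p ^ (m + 1) = x} := by
  haveI : NeZero p := ⟨hp.ne'⟩
  have hprime : p.Prime := (CharP.char_is_prime_of_pos (ResidueField A) p).out
  set 𝔐 := IsLocalRing.maximalIdeal A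
  set J := 𝔐 ^ j
  set mk := Ideal.Quotient.mk J
  have hpM : (p : A) ∈ 𝔐 := by
    have : residue A (p : A) = 0 := by
      rw [map_natCast]
      exact CharP.cast_eq_zero _ p
    rwa [← Ideal.Quotient.eq_zero_iff_mem]
  ext x
  simp only [Set.mem_setOf_eq]
  constructor
  · rintro ⟨u, rfl⟩
    -- lift u to a unit of A
    obtain ⟨a, ha⟩ := Ideal.Quotient.mk_surjective (I := J) (u : A ⧸ J)
    have hfactor : J ≤ 𝔐 := Ideal.pow_le_self (by omega)
    set f : (A ⧸ J) →+* ResidueField A := Ideal.Quotient.factor hfactor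
    have hfa : f (mk a) = residue A a := rfl
    have hres_unit : IsUnit (residue A a) := by
      rw [← hfa, ha]; exact u.isUnit.map f
    -- find a p-th root of residue a
    obtain ⟨b, hb⟩ := IsAlgClosed.exists_pow_nat_eq (residue A a) hp
    obtain ⟨c, hc⟩ := IsLocalRing.residue_surjective (R := A) b
    have hcunit : IsUnit c := by
      rw [← IsLocalRing.notMem_maximalIdeal (x := c)]
      intro hmem
      have : residue A c = 0 := Ideal.Quotient.eq_zero_iff_mem.mpr hmem
      rw [this] at hc
      apply hres_unit.ne_zero
      rw [← hb, ← hc, zero_pow hp.ne']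
    obtain ⟨cu, hcu⟩ := hcunit
    have ht : a - c ^ p ∈ 𝔐 := by
      have h0 : residue A (a - c ^ p) = 0 := by
        rw [map_sub, map_pow, hc, hb, sub_self]
      exact Ideal.Quotient.eq_zero_iff_mem.mp h0
    set t : A := ((cu⁻¹ : Aˣ) : A) ^ p * (a - c ^ p) with htdef
    have htM : t ∈ 𝔐 := Ideal.mul_mem_left _ _ ht
    have hinv : c ^ p * ((cu⁻¹ : Aˣ) : A) ^ p = 1 := by
      rw [← hcu, ← mul_pow, Units.mul_inv, one_pow]
    have ha_eq : a = c ^ p * (1 + t) := by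
      rw [htdef, mul_add, mul_one, ← mul_assoc, hinv, one_mul]
      ring
    -- (1+t)^(p^m) ≡ 1 mod J
    have hkey : (1 + t) ^ p ^ m - 1 ∈ J := by
      have h1 : (1 + t) ^ p ^ m - 1 ∈ 𝔐 ^ (m + 1) :=
        one_add_pow_prime_pow_sub_one_mem hprime hpM htM m
      exact Ideal.pow_le_pow_right (by omega) h1
    have hone : mk ((1 + t) ^ p ^ m) = 1 := by
      have := Ideal.Quotient.eq_zero_iff_mem.mpr hkey
      rw [map_sub, map_one, sub_eq_zero] at this
      exact this
    refine ⟨Units.map (mk : A →+* A ⧸ J).toMonoidHom cu, ?_⟩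
    have : ((Units.map (mk : A →+* A ⧸ J).toMonoidHom cu : (A ⧸ J)ˣ) : A ⧸ J) = mk c := by
      simp [hcu]
    rw [this, ← ha]
    calc (mk c) ^ p ^ (m + 1) = mk (c ^ p ^ (m + 1)) := by rw [map_pow]
    _ = mk ((c ^ p) ^ p ^ m * (1 + t) ^ p ^ m) := by
        rw [map_mul, hone, mul_one, ← pow_mul, map_pow, map_pow, ← pow_succ']
    _ = mk ((c ^ p * (1 + t)) ^ p ^ m) := by rw [mul_pow]
    _ = (mk a) ^ p ^ m := by rw [← ha_eq, map_pow]
  · rintro ⟨u, rfl⟩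
    exact ⟨u ^ p, by rw [Units.val_pow_eq_pow_val, ← pow_mul, ← pow_succ']⟩
end

section
/- Let p ≥ 5 be a prime, R a complete discrete valuation ring with maximal ideal 𝔪 whose residue field k = R/𝔪 is perfect of characteristic p, and for a finite j ≥ 1 set R_j = R/𝔪^j with residue map R_j → k. Let A, B, a, b ∈ R_jˣ be units satisfying A³·b² = a³·B² (equality of j-invariants of the Weierstrass curves y² = x³+Ax+B and y² = x³+ax+b over R_j), and suppose there exists ū ∈ kˣ such that the images of A and B in k equal ū⁴·(a mod 𝔪) and ū⁶·(b mod 𝔪) respectively (isomorphism of the reductions over k). Then there exists u ∈ R_jˣ with A = u⁴·a and B = u⁶·b, i.e. the two curves are isomorphic over R_j. -/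
/-- Auxiliary commutative-ring identity: if `A³b² = a³B²` and `Ai`, `bi` are inverses of
`A`, `b`, then `v = B·Ai·a·bi` satisfies `v²·a = A` and `v³·b = B`. -/
lemma weierstrass_aux_ring {S : Type*} [CommRing S] (A B a b Ai bi : S)
    (h : A ^ 3 * b ^ 2 = a ^ 3 * B ^ 2) (hAi : A * Ai = 1) (hbi : b * bi = 1) :
    (B * Ai * a * bi) ^ 2 * a = A ∧ (B * Ai * a * bi) ^ 3 * b = B := by
  constructor
  · linear_combination (-(Ai ^ 2 * bi ^ 2)) * h + (A * (A * Ai + 1) * (b * bi) ^ 2) * hAi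
      + (A * (b * bi + 1)) * hbi
  · linear_combination (-(B * Ai ^ 3 * bi ^ 3 * b)) * h
      + (B * (A ^ 2 * Ai ^ 2 + A * Ai + 1) * (b * bi) ^ 3) * hAi
      + (B * ((b * bi) ^ 2 + b * bi + 1)) * hbi

/-- Auxiliary commutative-ring identity for the residue computation: if `A = w⁴a`,
`B = w⁶b` and `Ai`, `bi` are inverses of `A`, `b`, then `B·Ai·a·bi = w²`. -/
lemma weierstrass_aux_ring2 {S : Type*} [CommRing S] (A B a b Ai bi w : S)
    (hA : A = w ^ 4 * a) (hB : B = w ^ 6 * b)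
    (hAi : A * Ai = 1) (hbi : b * bi = 1) :
    B * Ai * a * bi = w ^ 2 := by
  subst hA hB
  linear_combination (w ^ 2 * (b * bi)) * hAi + (w ^ 2) * hbi

/-- **Lemma (classification of `(0,0)`-type Weierstrass curves over `R/𝔪ʲ`).**
Let `p ≥ 5` be a prime and `R` a complete discrete valuation ring with maximal ideal `𝔪`
and perfect residue field `k = R/𝔪` of characteristic `p`; set `R_j = R/𝔪^j`. If
`A, B, a, b ∈ R_jˣ` satisfy `A³·b² = a³·B²` (equality of j-invariants) and the reductions
to `k` satisfy `Ā = w⁴·ā`, `B̄ = w⁶·b̄` for some `w ∈ kˣ` (isomorphism of the reductions),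
then there is `u ∈ R_jˣ` with `A = u⁴·a` and `B = u⁶·b` (isomorphism over `R_j`). -/
theorem weierstrass_iso_of_j_eq_of_residue_iso
    (p : ℕ) [Fact p.Prime] (hp : 5 ≤ p)
    (R : Type*) [CommRing R] [IsDomain R] [IsDiscreteValuationRing R]
    [IsAdicComplete (IsLocalRing.maximalIdeal R) R]
    [CharP (IsLocalRing.ResidueField R) p] [PerfectField (IsLocalRing.ResidueField R)]
    (j : ℕ) (hj : 1 ≤ j)
    (A B a b : (R ⧸ (IsLocalRing.maximalIdeal R ^ j))ˣ)
    (hjinv : (A : R ⧸ (IsLocalRing.maximalIdeal R ^ j)) ^ 3 * (b : R ⧸ (IsLocalRing.maximalIdeal R ^ j)) ^ 2 =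
      (a : R ⧸ (IsLocalRing.maximalIdeal R ^ j)) ^ 3 * (B : R ⧸ (IsLocalRing.maximalIdeal R ^ j)) ^ 2)
    (hres : ∃ w : (R ⧸ IsLocalRing.maximalIdeal R)ˣ,
      Ideal.Quotient.factor (Ideal.pow_le_self (by omega)) (A : R ⧸ (IsLocalRing.maximalIdeal R ^ j)) =
        (w : R ⧸ IsLocalRing.maximalIdeal R) ^ 4 *
          Ideal.Quotient.factor (Ideal.pow_le_self (by omega)) (a : R ⧸ (IsLocalRing.maximalIdeal R ^ j)) ∧
      Ideal.Quotient.factor (Ideal.pow_le_self (by omega)) (B : R ⧸ (IsLocalRing.maximalIdeal R ^ j)) =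
        (w : R ⧸ IsLocalRing.maximalIdeal R) ^ 6 *
          Ideal.Quotient.factor (Ideal.pow_le_self (by omega)) (b : R ⧸ (IsLocalRing.maximalIdeal R ^ j))) :
    ∃ u : (R ⧸ (IsLocalRing.maximalIdeal R ^ j))ˣ,
      (A : R ⧸ (IsLocalRing.maximalIdeal R ^ j)) = (u : R ⧸ (IsLocalRing.maximalIdeal R ^ j)) ^ 4 * a ∧
      (B : R ⧸ (IsLocalRing.maximalIdeal R ^ j)) = (u : R ⧸ (IsLocalRing.maximalIdeal R ^ j)) ^ 6 * b := by
  classical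
  obtain ⟨w, hwA, hwB⟩ := hres
  -- notation
  let 𝔪 : Ideal R := IsLocalRing.maximalIdeal R
  let φ : (R ⧸ 𝔪 ^ j) →+* (R ⧸ 𝔪) :=
    Ideal.Quotient.factor (Ideal.pow_le_self (by omega : j ≠ 0))
  -- the candidate square `v`
  let vU : (R ⧸ 𝔪 ^ j)ˣ := B * A⁻¹ * a * b⁻¹
  have hAi : (A : R ⧸ 𝔪 ^ j) * ((A⁻¹ : (R ⧸ 𝔪 ^ j)ˣ) : R ⧸ 𝔪 ^ j) = 1 := A.mul_inv
  have hbi : (b : R ⧸ 𝔪 ^ j) * ((b⁻¹ : (R ⧸ 𝔪 ^ j)ˣ) : R ⧸ 𝔪 ^ j) = 1 := b.mul_inv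
  obtain ⟨hv2, hv3⟩ := weierstrass_aux_ring (A : R ⧸ 𝔪 ^ j) B a b
    ((A⁻¹ : (R ⧸ 𝔪 ^ j)ˣ) : R ⧸ 𝔪 ^ j) ((b⁻¹ : (R ⧸ 𝔪 ^ j)ˣ) : R ⧸ 𝔪 ^ j) hjinv hAi hbi
  have hvU : (vU : R ⧸ 𝔪 ^ j) =
      (B : R ⧸ 𝔪 ^ j) * ((A⁻¹ : (R ⧸ 𝔪 ^ j)ˣ) : R ⧸ 𝔪 ^ j) * a
        * ((b⁻¹ : (R ⧸ 𝔪 ^ j)ˣ) : R ⧸ 𝔪 ^ j) := by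
    push_cast [vU]; ring
  -- residue field computation: `φ v = w²`
  have hvres : φ (vU : R ⧸ 𝔪 ^ j) = (w : R ⧸ 𝔪) ^ 2 := by
    rw [hvU]
    simp only [map_mul]
    exact weierstrass_aux_ring2 _ _ _ _ _ _ _ hwA hwB
      (by rw [← map_mul, hAi, map_one]) (by rw [← map_mul, hbi, map_one])
  -- lift `v` and `w` to `R`
  obtain ⟨x, hx⟩ := Ideal.Quotient.mk_surjective (I := 𝔪 ^ j) (vU : R ⧸ 𝔪 ^ j)
  obtain ⟨y, hy⟩ := Ideal.Quotient.mk_surjective (I := 𝔪) (w : R ⧸ 𝔪)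
  have hxres : Ideal.Quotient.mk 𝔪 x = (w : R ⧸ 𝔪) ^ 2 := by
    have h1 : φ (Ideal.Quotient.mk (𝔪 ^ j) x) = Ideal.Quotient.mk 𝔪 x :=
      Ideal.Quotient.factor_mk _ _
    rw [← h1, hx, hvres]
  -- Hensel's lemma in `R` for `X ^ 2 - x` at the approximate root `y`
  have hH : HenselianRing R 𝔪 := inferInstance
  have hmonic : (Polynomial.X ^ 2 - Polynomial.C x : Polynomial R).Monic :=
    Polynomial.monic_X_pow_sub_C x (by norm_num)
  have heval : (Polynomial.X ^ 2 - Polynomial.C x : Polynomial R).eval y ∈ 𝔪 := by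
    have h2 : (Polynomial.X ^ 2 - Polynomial.C x : Polynomial R).eval y = y ^ 2 - x := by simp
    rw [h2]
    refine Ideal.Quotient.eq_zero_iff_mem.mp ?_
    rw [map_sub, map_pow, hy, hxres]
    exact sub_self _
  have hderiv : IsUnit (Ideal.Quotient.mk 𝔪
      ((Polynomial.X ^ 2 - Polynomial.C x : Polynomial R).derivative.eval y)) := by
    have hd : (Polynomial.X ^ 2 - Polynomial.C x : Polynomial R).derivative.eval y = 2 * y := by
      simp; norm_num
    have h2R : IsUnit (2 : R) := by
      by_contra h
      have hm : (2 : R) ∈ IsLocalRing.maximalIdeal R :=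
        (IsLocalRing.mem_maximalIdeal (2 : R)).mpr (mem_nonunits_iff.mpr h)
      have h0 : (2 : IsLocalRing.ResidueField R) = 0 := by
        calc (2 : IsLocalRing.ResidueField R) = IsLocalRing.residue R 2 :=
              (map_ofNat (IsLocalRing.residue R) 2).symm
          _ = 0 := Ideal.Quotient.eq_zero_iff_mem.mpr hm
      have hdvd : p ∣ 2 :=
        (CharP.cast_eq_zero_iff (IsLocalRing.ResidueField R) p 2).mp (by exact_mod_cast h0)
      have := Nat.le_of_dvd (by norm_num) hdvd
      omega
    rw [hd, map_mul, hy]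
    exact (h2R.map (Ideal.Quotient.mk 𝔪)).mul w.isUnit
  obtain ⟨r, hr, -⟩ := hH.is_henselian _ hmonic y heval hderiv
  have hr2 : r ^ 2 = x := by
    have h3 := hr
    simp only [Polynomial.IsRoot, Polynomial.eval_sub, Polynomial.eval_pow, Polynomial.eval_X,
      Polynomial.eval_C, sub_eq_zero] at h3
    exact h3
  -- the square root of `v` in `R ⧸ 𝔪 ^ j`
  have hu₀2 : (Ideal.Quotient.mk (𝔪 ^ j) r) ^ 2 = (vU : R ⧸ 𝔪 ^ j) := by
    rw [← map_pow, hr2, hx]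
  have hu₀unit : IsUnit (Ideal.Quotient.mk (𝔪 ^ j) r) := by
    have h4 : IsUnit ((Ideal.Quotient.mk (𝔪 ^ j) r) ^ 2) := hu₀2 ▸ vU.isUnit
    exact (isUnit_pow_iff (two_ne_zero)).mp h4
  obtain ⟨u, hu⟩ := hu₀unit
  refine ⟨u, ?_, ?_⟩
  · calc (A : R ⧸ 𝔪 ^ j) = (vU : R ⧸ 𝔪 ^ j) ^ 2 * a := by rw [hvU]; exact hv2.symm
      _ = (u : R ⧸ 𝔪 ^ j) ^ 4 * a := by rw [← hu₀2, hu]; ring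
  · calc (B : R ⧸ 𝔪 ^ j) = (vU : R ⧸ 𝔪 ^ j) ^ 3 * b := by rw [hvU]; exact hv3.symm
      _ = (u : R ⧸ 𝔪 ^ j) ^ 6 * b := by rw [← hu₀2, hu]; ring
end
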